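/- Let f, g : A → B be Frobenius m- and n-homomorphisms respectively between commutative algebras over a field of characteristic zero. Then f + g is a Frobenius (m+n)-homomorphism. -/

import Mathlib

/-!
Decomposing a permutation of `Fin (n + 1)` as a permutation `σ` of `Fin n` into which `0` is
inserted, either as a fixed point or into the cycle of some `q`, gives the recursion
`Φ_{n+1}(f)(b, a) = f(b) Φ_n(f)(a) - ∑_q Φ_n(f)(a with a_q replaced by a_q b)`.
By induction on the number of arguments, it shows that `Φ_{m+1}(f) ≡ 0` forces `Φ_N(f) ≡ 0`
for all `N > m`, and that `Φ_N(f + g)(a) = ∑_S Φ(f)(a|_S) Φ(g)(a|_{Sᶜ})` over subsets `S` of the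
indices. For `N = m + n + 1` every `S` has `|S| > m` or `|Sᶜ| > n`.
-/

open Finset

variable {A B : Type*} [CommRing A] [CommRing B]
/-- The Frobenius term `f_σ(a₁,…,a_n)`: the product over the cycles of `σ`
(including fixed points) of `f` applied to the product of the `aᵢ` along the cycle. -/
def frobTerm (f : A → B) {n : ℕ} (a : Fin n → A) (σ : Equiv.Perm (Fin n)) : B :=
  ∏ i ∈ Finset.univ.filter (fun i => ∀ j, σ.SameCycle i j → i ≤ j),
    f (∏ j ∈ Finset.univ.filter (fun j => σ.SameCycle i j), a j)

/-- The Frobenius transformation (closed formula):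
`Φ_n(f)(a₁,…,a_n) = ∑_{σ∈Σ_n} ε(σ) f_σ(a₁,…,a_n)`. -/
def PhiPerm (f : A → B) {n : ℕ} (a : Fin n → A) : B :=
  ∑ σ : Equiv.Perm (Fin n), (Equiv.Perm.sign σ : ℤ) • frobTerm f a σ

/-- `f` is a Frobenius `n`-homomorphism: `Φ_{n+1}(f) ≡ 0` and `f(1) = n`. -/
def IsFrobeniusHom (f : A → B) (n : ℕ) : Prop :=
  (∀ a : Fin (n + 1) → A, PhiPerm f a = 0) ∧ f 1 = (n : B)

open Equiv Equiv.Perm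

namespace Equiv.Perm

variable {α β : Type*}

theorem SameCycle.map_of_sameCycle_apply {π : Perm α} {g : Perm β} {W : α → β}
    (h : ∀ u, g.SameCycle (W u) (W (π u))) {u v : α} (huv : π.SameCycle u v) :
    g.SameCycle (W u) (W v) := by
  obtain ⟨i, rfl⟩ := huv
  induction i using Int.induction_on with
  | zero => exact .rfl
  | succ i ih =>
    have step := h ((π ^ (i : ℤ)) u)
    rw [← mul_apply, ← zpow_one_add, add_comm] at step
    exact ih.trans step
  | pred i ih =>
    have step := h ((π ^ (-(i : ℤ) - 1)) u)
    rw [← mul_apply, ← zpow_one_add, add_sub_cancel] at step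
    exact ih.trans step.symm

section cycleSets

variable [Fintype α] [DecidableEq α]

def cycleSet (σ : Perm α) (i : α) : Finset α := {j | σ.SameCycle i j}

def cycleSets (σ : Perm α) : Finset (Finset α) := Finset.univ.image σ.cycleSet

@[simp]
theorem mem_cycleSet {σ : Perm α} {i j : α} : j ∈ σ.cycleSet i ↔ σ.SameCycle i j := by
  simp [cycleSet]

theorem cycleSet_eq_cycleSet_iff {σ : Perm α} {i j : α} :
    σ.cycleSet i = σ.cycleSet j ↔ σ.SameCycle i j := by
  refine ⟨fun h => ?_, fun h => Finset.ext fun k => ?_⟩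
  · exact mem_cycleSet.mp (by rw [h]; exact mem_cycleSet.mpr .rfl)
  · simp only [mem_cycleSet]
    exact ⟨h.symm.trans, h.trans⟩

end cycleSets

section decomposeFin

variable {n : ℕ} (σ : Perm (Fin n))

theorem decomposeFin_symm_zero_apply_succ (x : Fin n) :
    decomposeFin.symm (0, σ) x.succ = (σ x).succ := by
  simp [decomposeFin_symm_apply_succ]

theorem sameCycle_decomposeFin_symm_zero_zero_iff {v : Fin (n + 1)} :
    (decomposeFin.symm (0, σ)).SameCycle 0 v ↔ v = 0 :=
  ⟨fun h => (h.eq_of_left (decomposeFin_symm_apply_zero 0 σ)).symm, by rintro rfl; exact .rfl⟩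

theorem sameCycle_decomposeFin_symm_zero_succ_succ {x y : Fin n} :
    (decomposeFin.symm (0, σ)).SameCycle x.succ y.succ ↔ σ.SameCycle x y := by
  refine ⟨fun h => ?_, fun h => ?_⟩
  · refine SameCycle.map_of_sameCycle_apply (W := (Fin.cases x id : Fin (n + 1) → Fin n))
      (fun u => ?_) h
    cases u using Fin.cases with
    | zero => rw [decomposeFin_symm_apply_zero]
    | succ z => simpa [decomposeFin_symm_zero_apply_succ] using sameCycle_apply_right.2 .rfl
  · refine SameCycle.map_of_sameCycle_apply (W := Fin.succ) (fun z => ?_) h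
    rw [← decomposeFin_symm_zero_apply_succ]
    exact sameCycle_apply_right.2 .rfl

theorem cycleSets_decomposeFin_symm_zero :
    (decomposeFin.symm (0, σ)).cycleSets =
      insert {0} (σ.cycleSets.image (map (Fin.succEmb n))) := by
  have h_zero : (decomposeFin.symm (0, σ)).cycleSet 0 = {0} := by
    ext v
    simp [sameCycle_decomposeFin_symm_zero_zero_iff]
  have h_succ (y : Fin n) :
      (decomposeFin.symm (0, σ)).cycleSet y.succ = (σ.cycleSet y).map (Fin.succEmb n) := by
    ext v
    cases v using Fin.cases with
    | zero =>
      rw [mem_cycleSet, sameCycle_comm, sameCycle_decomposeFin_symm_zero_zero_iff]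
      simp
    | succ z => simp [sameCycle_decomposeFin_symm_zero_succ_succ]
  rw [cycleSets, cycleSets, Fin.univ_succ, cons_eq_insert, image_insert, h_zero, map_eq_image,
    image_image, image_image]
  simp only [Function.comp_def, Function.Embedding.coeFn_mk, h_succ]

variable (q : Fin n)

theorem cases_decomposeFin_symm_succ_apply_succ (z : Fin n) :
    (Fin.cases q id (decomposeFin.symm (q.succ, σ) z.succ) : Fin n) = σ z := by
  rw [decomposeFin_symm_apply_succ]
  by_cases hz : σ z = q
  · simp [hz]
  · rw [swap_apply_of_ne_of_ne (Fin.succ_ne_zero _) (by simpa using hz)]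
    rfl

theorem sameCycle_decomposeFin_symm_succ_cases (u : Fin (n + 1)) :
    (decomposeFin.symm (q.succ, σ)).SameCycle u (Fin.cases q id u : Fin n).succ := by
  cases u using Fin.cases with
  | zero => simpa [decomposeFin_symm_apply_zero] using
      sameCycle_apply_right.2 (.rfl : (decomposeFin.symm (q.succ, σ)).SameCycle 0 0)
  | succ z => exact .rfl

/-- `0` is inserted into the cycle of `q`, so it is tracked by `q`. -/
theorem sameCycle_decomposeFin_symm_succ {u v : Fin (n + 1)} :
    (decomposeFin.symm (q.succ, σ)).SameCycle u v ↔
      σ.SameCycle (Fin.cases q id u : Fin n) (Fin.cases q id v) := by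
  set π := decomposeFin.symm (q.succ, σ)
  refine ⟨fun h => SameCycle.map_of_sameCycle_apply (fun w => ?_) h, fun h => ?_⟩
  · cases w using Fin.cases with
    | zero => simp [π, decomposeFin_symm_apply_zero, SameCycle.rfl]
    | succ z =>
      rw [cases_decomposeFin_symm_succ_apply_succ]
      exact sameCycle_apply_right.2 .rfl
  · have hsucc : π.SameCycle (Fin.cases q id u : Fin n).succ (Fin.cases q id v : Fin n).succ := by
      refine SameCycle.map_of_sameCycle_apply (W := Fin.succ) (fun z => ?_) h
      have step := sameCycle_decomposeFin_symm_succ_cases σ q (π z.succ)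
      rw [cases_decomposeFin_symm_succ_apply_succ] at step
      exact (sameCycle_apply_right.2 .rfl).trans step
    exact ((sameCycle_decomposeFin_symm_succ_cases σ q u).trans hsucc).trans
      (sameCycle_decomposeFin_symm_succ_cases σ q v).symm

theorem cycleSets_decomposeFin_symm_succ :
    (decomposeFin.symm (q.succ, σ)).cycleSets =
      σ.cycleSets.image
        (fun C => ({v | (Fin.cases q id v : Fin n) ∈ C} : Finset (Fin (n + 1)))) := by
  have h (u : Fin (n + 1)) : (decomposeFin.symm (q.succ, σ)).cycleSet u =
      ({v | (Fin.cases q id v : Fin n) ∈ σ.cycleSet (Fin.cases q id u)} :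
        Finset (Fin (n + 1))) := by
    ext v
    simp [sameCycle_decomposeFin_symm_succ]
  have h_surj : (univ.image (Fin.cases q id : Fin (n + 1) → Fin n)) = univ :=
    eq_univ_of_forall fun y => mem_image.2 ⟨y.succ, mem_univ _, rfl⟩
  rw [cycleSets, cycleSets, ← h_surj, image_image, image_image]
  rw [funext h]
  rfl

end decomposeFin

end Equiv.Perm

theorem frobTerm_eq_prod_cycleSets (f : A → B) {n : ℕ} (a : Fin n → A) (σ : Perm (Fin n)) :
    frobTerm f a σ = ∏ C ∈ σ.cycleSets, f (∏ j ∈ C, a j) := by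
  set R := ({i | ∀ j, σ.SameCycle i j → i ≤ j} : Finset (Fin n))
  have h_inj : Set.InjOn σ.cycleSet R := fun i hi j hj hij => by
    have h := cycleSet_eq_cycleSet_iff.1 hij
    exact le_antisymm ((mem_filter.1 hi).2 j h) ((mem_filter.1 hj).2 i h.symm)
  have h_image : σ.cycleSets = R.image σ.cycleSet := by
    refine Subset.antisymm (fun C hC => ?_) (image_subset_image (subset_univ R))
    obtain ⟨i, -, rfl⟩ := mem_image.1 hC
    have hi : i ∈ σ.cycleSet i := mem_cycleSet.2 .rfl
    set i₀ := (σ.cycleSet i).min' ⟨i, hi⟩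
    have h₀ : σ.SameCycle i i₀ := mem_cycleSet.1 (min'_mem _ _)
    refine mem_image.2 ⟨i₀, mem_filter.2 ⟨mem_univ _, fun j hj => ?_⟩,
      cycleSet_eq_cycleSet_iff.2 h₀.symm⟩
    exact min'_le _ _ (mem_cycleSet.2 (h₀.trans hj))
  rw [h_image, prod_image h_inj]
  rfl

theorem frobTerm_cons_decomposeFin_symm_zero (f : A → B) {n : ℕ} (b : A) (a : Fin n → A)
    (σ : Perm (Fin n)) :
    frobTerm f (Fin.cons b a) (decomposeFin.symm (0, σ)) = f b * frobTerm f a σ := by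
  rw [frobTerm_eq_prod_cycleSets, frobTerm_eq_prod_cycleSets, cycleSets_decomposeFin_symm_zero,
    prod_insert, prod_image (map_injective _).injOn, prod_singleton]
  · simp [prod_map]
  · intro h
    obtain ⟨C, -, hC⟩ := mem_image.1 h
    have h₀ : (0 : Fin (n + 1)) ∈ C.map (Fin.succEmb n) := hC ▸ mem_singleton_self 0
    simp at h₀

theorem frobTerm_cons_decomposeFin_symm_succ (f : A → B) {n : ℕ} (b : A) (a : Fin n → A)
    (σ : Perm (Fin n)) (q : Fin n) :
    frobTerm f (Fin.cons b a) (decomposeFin.symm (q.succ, σ)) =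
      frobTerm f (Function.update a q (a q * b)) σ := by
  have h_inj : Function.Injective
      (fun C : Finset (Fin n) => ({v | (Fin.cases q id v : Fin n) ∈ C} : Finset (Fin (n + 1)))) :=
    fun C D h => Finset.ext fun y => by simpa using Finset.ext_iff.1 h y.succ
  rw [frobTerm_eq_prod_cycleSets, frobTerm_eq_prod_cycleSets, cycleSets_decomposeFin_symm_succ,
    prod_image h_inj.injOn]
  refine prod_congr rfl fun C _ => congrArg f ?_
  have h_prod : ∏ j ∈ ({v | (Fin.cases q id v : Fin n) ∈ C} : Finset (Fin (n + 1))),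
      (Fin.cons b a : Fin (n + 1) → A) j = (if q ∈ C then b else 1) * ∏ j ∈ C, a j := by
    rw [prod_filter, Fin.prod_univ_succ]
    simp
  rw [h_prod]
  by_cases hq : q ∈ C
  · rw [prod_update_of_mem hq, sdiff_singleton_eq_erase, ← mul_prod_erase C a hq, if_pos hq]
    ring
  · rw [prod_update_of_notMem hq, if_neg hq, one_mul]

theorem phiPerm_fin_zero (f : A → B) (a : Fin 0 → A) : PhiPerm f a = 1 := by
  simp [PhiPerm, frobTerm]

theorem phiPerm_cons (f : A → B) {n : ℕ} (b : A) (a : Fin n → A) :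
    PhiPerm f (Fin.cons b a) =
      f b * PhiPerm f a - ∑ q : Fin n, PhiPerm f (Function.update a q (a q * b)) := by
  rw [PhiPerm, ← decomposeFin.symm.sum_comp, Fintype.sum_prod_type, Fin.sum_univ_succ]
  simp only [decomposeFin.symm_sign, frobTerm_cons_decomposeFin_symm_zero,
    frobTerm_cons_decomposeFin_symm_succ, PhiPerm, mul_sum, sub_eq_add_neg, ← sum_neg_distrib]
  simp [Fin.succ_ne_zero, mul_left_comm]

theorem phiPerm_eq_zero_of_le {f : A → B} {m : ℕ}
    (hf : ∀ a : Fin (m + 1) → A, PhiPerm f a = 0) {N : ℕ} (hN : m + 1 ≤ N) (a : Fin N → A) :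
    PhiPerm f a = 0 := by
  induction N, hN using Nat.le_induction with
  | base => exact hf a
  | succ N _ ih =>
    rw [← Fin.cons_self_tail a, phiPerm_cons, ih, sum_eq_zero fun q _ => ih _, mul_zero, sub_zero]

section restriction

variable {N : ℕ}

theorem phiPerm_comp_orderEmbOfFin (f : A → B) (a : Fin N → A) (S : Finset (Fin N)) {k : ℕ}
    (h : #S = k) : PhiPerm f (a ∘ S.orderEmbOfFin h) = PhiPerm f (a ∘ S.orderEmbOfFin rfl) := by
  subst h
  rfl

theorem orderEmbOfFin_map_succEmb (S : Finset (Fin N)) :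
    ⇑((S.map (Fin.succEmb N)).orderEmbOfFin (card_map _)) = Fin.succ ∘ S.orderEmbOfFin rfl :=
  (orderEmbOfFin_unique _ (fun _ => mem_map_of_mem _ (orderEmbOfFin_mem _ _ _))
    (Fin.strictMono_succ.comp (S.orderEmbOfFin rfl).strictMono)).symm

theorem orderEmbOfFin_insert_zero_map_succEmb (S : Finset (Fin N))
    (h : #(insert 0 (S.map (Fin.succEmb N))) = #S + 1) :
    ⇑((insert 0 (S.map (Fin.succEmb N))).orderEmbOfFin h) =
      Fin.cons 0 (Fin.succ ∘ S.orderEmbOfFin rfl) := by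
  refine (orderEmbOfFin_unique _ (fun i => ?_) ?_).symm
  · cases i using Fin.cases with
    | zero => exact mem_insert_self _ _
    | succ _ => exact mem_insert_of_mem (mem_map_of_mem _ (orderEmbOfFin_mem S rfl _))
  · exact Fin.strictMono_cons.2 ⟨fun _ => Fin.succ_pos _,
      Fin.strictMono_succ.comp (S.orderEmbOfFin rfl).strictMono⟩

theorem phiPerm_cons_comp_orderEmbOfFin_map_succEmb (f : A → B) (b : A) (a : Fin N → A)
    (S : Finset (Fin N)) :
    PhiPerm f (Fin.cons b a ∘ (S.map (Fin.succEmb N)).orderEmbOfFin rfl) =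
      PhiPerm f (a ∘ S.orderEmbOfFin rfl) := by
  rw [← phiPerm_comp_orderEmbOfFin _ _ _ (card_map _), orderEmbOfFin_map_succEmb]
  rfl

theorem phiPerm_cons_comp_orderEmbOfFin_insert_zero (f : A → B) (b : A) (a : Fin N → A)
    (S : Finset (Fin N)) :
    PhiPerm f (Fin.cons b a ∘ (insert 0 (S.map (Fin.succEmb N))).orderEmbOfFin rfl) =
      f b * PhiPerm f (a ∘ S.orderEmbOfFin rfl) -
        ∑ q ∈ S, PhiPerm f (Function.update a q (a q * b) ∘ S.orderEmbOfFin rfl) := by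
  have h : #(insert 0 (S.map (Fin.succEmb N))) = #S + 1 := by
    rw [card_insert_of_notMem (by simp), card_map]
  have h_cons : Fin.cons b a ∘ Fin.cons 0 (Fin.succ ∘ S.orderEmbOfFin rfl) =
      Fin.cons b (a ∘ S.orderEmbOfFin rfl) := by
    funext i
    cases i using Fin.cases <;> rfl
  have h_sum (F : Fin N → B) : ∑ q ∈ S, F q = ∑ i, F (S.orderEmbOfFin rfl i) := by
    conv_lhs => rw [← map_orderEmbOfFin_univ S rfl]
    exact sum_map _ _ _
  rw [← phiPerm_comp_orderEmbOfFin _ _ _ h, orderEmbOfFin_insert_zero_map_succEmb, h_cons,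
    phiPerm_cons, h_sum]
  simp only [Function.comp_apply,
    ← Function.update_comp_eq_of_injective _ (S.orderEmbOfFin rfl).injective]

theorem phiPerm_update_comp_orderEmbOfFin_of_notMem (f : A → B) (a : Fin N → A)
    {S : Finset (Fin N)} {q : Fin N} (hq : q ∉ S) (x : A) :
    PhiPerm f (Function.update a q x ∘ S.orderEmbOfFin rfl) =
      PhiPerm f (a ∘ S.orderEmbOfFin rfl) := by
  rw [Function.update_comp_eq_of_notMem_range _ _ (by rwa [range_orderEmbOfFin])]

end restriction

section subsets

variable {N : ℕ}

theorem sum_finset_fin_succ {M : Type*} [AddCommMonoid M] (F : Finset (Fin (N + 1)) → M) :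
    ∑ T, F T = ∑ S : Finset (Fin N),
      (F (S.map (Fin.succEmb N)) + F (insert 0 (S.map (Fin.succEmb N)))) := by
  rw [← powerset_univ, Fin.univ_succ, cons_eq_insert, sum_powerset_insert (by simp),
    ← sum_add_distrib, map_eq_image, powerset_image, sum_image]
  · simp [map_eq_image]
  · exact (image_injective (Fin.succ_injective N)).injOn

theorem compl_map_succEmb (S : Finset (Fin N)) :
    (S.map (Fin.succEmb N))ᶜ = insert 0 (Sᶜ.map (Fin.succEmb N)) := by
  ext x
  cases x using Fin.cases <;> simp [Fin.succ_ne_zero]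

theorem compl_insert_zero_map_succEmb (S : Finset (Fin N)) :
    (insert 0 (S.map (Fin.succEmb N)))ᶜ = Sᶜ.map (Fin.succEmb N) := by
  rw [← compl_compl (Sᶜ.map (Fin.succEmb N)), compl_map_succEmb, compl_compl]

end subsets

theorem phiPerm_add (f g : A → B) {N : ℕ} (a : Fin N → A) :
    PhiPerm (f + g) a = ∑ S : Finset (Fin N),
      PhiPerm f (a ∘ S.orderEmbOfFin rfl) * PhiPerm g (a ∘ Sᶜ.orderEmbOfFin rfl) := by
  induction N with
  | zero =>
    have h_empty (h : A → B) (S : Finset (Fin 0)) :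
        PhiPerm h (a ∘ S.orderEmbOfFin rfl) = 1 := by
      rw [← phiPerm_comp_orderEmbOfFin h a S (card_eq_zero.2 (Subsingleton.elim _ _)),
        phiPerm_fin_zero]
    simp [h_empty, phiPerm_fin_zero]
  | succ N ih =>
    obtain ⟨b, t, rfl⟩ : ∃ b t, a = Fin.cons b t := ⟨_, _, (Fin.cons_self_tail a).symm⟩
    have h_split (S : Finset (Fin N)) :
        ∑ q, PhiPerm f (Function.update t q (t q * b) ∘ S.orderEmbOfFin rfl) *
            PhiPerm g (Function.update t q (t q * b) ∘ Sᶜ.orderEmbOfFin rfl) =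
          ∑ q ∈ S, PhiPerm f (Function.update t q (t q * b) ∘ S.orderEmbOfFin rfl) *
              PhiPerm g (t ∘ Sᶜ.orderEmbOfFin rfl) +
            ∑ q ∈ Sᶜ, PhiPerm f (t ∘ S.orderEmbOfFin rfl) *
              PhiPerm g (Function.update t q (t q * b) ∘ Sᶜ.orderEmbOfFin rfl) := by
      rw [← sum_add_sum_compl S]
      congr 1 <;> refine sum_congr rfl fun q hq => ?_
      · rw [phiPerm_update_comp_orderEmbOfFin_of_notMem _ _ (notMem_compl.2 hq)]
      · rw [phiPerm_update_comp_orderEmbOfFin_of_notMem _ _ (mem_compl.1 hq)]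
    rw [phiPerm_cons, ih, sum_congr rfl fun q _ => ih _, sum_comm, mul_sum, ← sum_sub_distrib,
      sum_finset_fin_succ]
    refine sum_congr rfl fun S _ => ?_
    rw [compl_map_succEmb, compl_insert_zero_map_succEmb,
      phiPerm_cons_comp_orderEmbOfFin_map_succEmb, phiPerm_cons_comp_orderEmbOfFin_map_succEmb,
      phiPerm_cons_comp_orderEmbOfFin_insert_zero, phiPerm_cons_comp_orderEmbOfFin_insert_zero,
      h_split, Pi.add_apply, ← sum_mul, ← mul_sum]
    ring

theorem isFrobeniusHom_add_general {k : Type*} [Field k]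
    [Algebra k A] [Algebra k B] (f g : A →ₗ[k] B) (m n : ℕ)
    (hf : IsFrobeniusHom (f : A → B) m) (hg : IsFrobeniusHom (g : A → B) n) :
    IsFrobeniusHom ((f + g : A →ₗ[k] B) : A → B) (m + n) := by
  refine ⟨fun a => ?_, by rw [LinearMap.add_apply, hf.2, hg.2, Nat.cast_add]⟩
  rw [show ⇑(f + g) = ⇑f + ⇑g from rfl, phiPerm_add]
  refine sum_eq_zero fun S _ => ?_
  have h_card : #S + #Sᶜ = m + n + 1 := by rw [card_add_card_compl, Fintype.card_fin]
  rcases le_or_gt (m + 1) #S with h | h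
  · rw [phiPerm_eq_zero_of_le hf.1 h, zero_mul]
  · rw [phiPerm_eq_zero_of_le hg.1 (by omega : n + 1 ≤ #Sᶜ), mul_zero]

/-- The sum of a Frobenius `m`-homomorphism and a Frobenius `n`-homomorphism is a
Frobenius `(m+n)`-homomorphism. -/
theorem isFrobeniusHom_add {k : Type*} [Field k] [CharZero k]
    [Algebra k A] [Algebra k B] (f g : A →ₗ[k] B) (m n : ℕ)
    (hf : IsFrobeniusHom (f : A → B) m) (hg : IsFrobeniusHom (g : A → B) n) :
    IsFrobeniusHom ((f + g : A →ₗ[k] B) : A → B) (m + n) :=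
  isFrobeniusHom_add_general f g m n hf hg
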